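/- arXiv:1709.04955 — 3 statements merged into one kernel-verified Lean document; each statement's English description precedes it below -/
import Mathlib

section
/- For every real number α, the identity ∫_0^∞ ln(1 + e^{-α} e^{-x}) dx = ∫_0^{ln(1 + e^{-α})} t/(1 - e^{-t}) dt holds, where the integrand t/(1 - e^{-t}) is extended to take the value 1 at t = 0. -/
open MeasureTheory intervalIntegral Real Filter Topology Set

/-- The function `t ↦ t / (1 - e^{-t})`, extended continuously by the value `1` at `t = 0`. -/
noncomputable def F (t : ℝ) : ℝ := if t = 0 then 1 else t / (1 - Real.exp (-t))

lemma F_continuous : Continuous F := by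
  rw [continuous_iff_continuousAt]
  intro t
  rcases eq_or_ne t 0 with rfl | ht
  · have h1 : HasDerivAt (fun s : ℝ => 1 - Real.exp (-s)) 1 0 := by
      have h0 : HasDerivAt (fun s : ℝ => Real.exp (-s)) (-Real.exp (-0)) 0 := by
        simpa [Function.comp_def] using (Real.hasDerivAt_exp (-0)).comp 0 (hasDerivAt_neg 0)
      simpa using (h0.const_sub 1)
    have h2 : Tendsto (fun s : ℝ => (1 - Real.exp (-s)) / s) (𝓝[≠] 0) (𝓝 1) := by
      have hs := hasDerivAt_iff_tendsto_slope.mp h1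
      refine hs.congr' ?_
      filter_upwards [self_mem_nhdsWithin] with s _
      simp [slope_def_field]
    have h3 : Tendsto F (𝓝[≠] 0) (𝓝 1) := by
      have h4 := h2.inv₀ one_ne_zero
      rw [inv_one] at h4
      refine h4.congr' ?_
      filter_upwards [self_mem_nhdsWithin] with s hs
      simp only [Set.mem_compl_iff, Set.mem_singleton_iff] at hs
      simp [F, hs, inv_div]
    have : Tendsto F (𝓝 0) (𝓝 1) := by
      rw [← nhdsNE_sup_pure 0]
      refine Tendsto.sup h3 ?_
      have : F 0 = 1 := by simp [F]
      simpa [this] using (tendsto_pure_nhds F 0)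
    simpa [ContinuousAt, F] using this
  · have hden : 1 - Real.exp (-t) ≠ 0 := by
      intro h
      have : Real.exp (-t) = 1 := by linarith
      rw [Real.exp_eq_one_iff] at this
      exact ht (by linarith)
    have hc : ContinuousAt (fun s : ℝ => s / (1 - Real.exp (-s))) t := by
      apply ContinuousAt.div
      · exact continuousAt_id
      · fun_prop
      · exact hden
    refine hc.congr ?_
    filter_upwards [isOpen_compl_singleton.mem_nhds ht] with s hs
    simp only [Set.mem_compl_iff, Set.mem_singleton_iff] at hs
    simp [F, hs]

theorem stmt_7 (α : ℝ) :
    ∫ x in Set.Ioi (0 : ℝ), Real.log (1 + Real.exp (-α) * Real.exp (-x)) =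
      ∫ t in (0 : ℝ)..(Real.log (1 + Real.exp (-α))), F t := by
  set c := Real.exp (-α) with hc
  have hcpos : 0 < c := Real.exp_pos _
  set g : ℝ → ℝ := fun x => Real.log (1 + c * Real.exp (-x)) with hgdef
  have hden : ∀ x : ℝ, 0 < 1 + c * Real.exp (-x) := fun x => by
    have := mul_pos hcpos (Real.exp_pos (-x)); linarith
  have hgpos : ∀ x : ℝ, 0 < g x := fun x => by
    have := mul_pos hcpos (Real.exp_pos (-x))
    exact Real.log_pos (by linarith)
  set g' : ℝ → ℝ := fun x => -(c * Real.exp (-x)) / (1 + c * Real.exp (-x)) with hg'def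
  have hderiv : ∀ x : ℝ, HasDerivAt g (g' x) x := by
    intro x
    have h0 : HasDerivAt (fun y : ℝ => Real.exp (-y)) (-Real.exp (-x)) x := by
      simpa [Function.comp_def] using (Real.hasDerivAt_exp (-x)).comp x (hasDerivAt_neg x)
    have h1 : HasDerivAt (fun y : ℝ => 1 + c * Real.exp (-y)) (-(c * Real.exp (-x))) x := by
      have := (h0.const_mul c).const_add 1
      simpa [mul_comm, mul_neg] using this
    exact h1.log (hden x).ne'
  have hcontg' : Continuous g' := by
    apply Continuous.div
    · fun_prop
    · fun_prop
    · exact fun x => (hden x).ne'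
  have hcontg : Continuous g := by
    rw [continuous_iff_continuousAt]
    exact fun x => (hderiv x).continuousAt
  -- substitution on finite intervals
  have hsub : ∀ M : ℝ, ∫ x in (0:ℝ)..M, g x = ∫ t in g M..g 0, F t := by
    intro M
    have hkey := intervalIntegral.integral_comp_smul_deriv
      (f := g) (f' := g') (g := F)
      (fun x _ => hderiv x) hcontg'.continuousOn F_continuous (a := 0) (b := M)
    have heq : ∀ x : ℝ, g' x • F (g x) = -g x := by
      intro x
      have hu : c * Real.exp (-x) ≠ 0 := (mul_pos hcpos (Real.exp_pos _)).ne'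
      have hexp : Real.exp (-(g x)) = (1 + c * Real.exp (-x))⁻¹ := by
        rw [Real.exp_neg, Real.exp_log (hden x)]
      have hFg : F (g x) = g x / (1 - (1 + c * Real.exp (-x))⁻¹) := by
        rw [F, if_neg (hgpos x).ne', hexp]
      rw [hFg]
      simp only [smul_eq_mul, hg'def]
      field_simp
      ring
    have hL : ∫ x in (0:ℝ)..M, g' x • F (g x) = ∫ x in (0:ℝ)..M, -g x := by
      apply intervalIntegral.integral_congr
      exact fun x _ => heq x
    simp only [Function.comp_apply] at hkey
    rw [hL, intervalIntegral.integral_neg] at hkey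
    rw [intervalIntegral.integral_symm (g 0) (g M)]
    linarith [hkey]
  -- LHS is the limit of finite-interval integrals
  have hgint : IntegrableOn g (Set.Ioi (0:ℝ)) := by
    have hbase : IntegrableOn (fun x : ℝ => Real.exp (-x)) (Set.Ioi (0:ℝ)) := by
      simpa using exp_neg_integrableOn_Ioi (0:ℝ) (by norm_num : (0:ℝ) < 1)
    have hbd : IntegrableOn (fun x : ℝ => c * Real.exp (-x)) (Set.Ioi (0:ℝ)) :=
      hbase.const_mul c
    apply hbd.mono' (hcontg.aestronglyMeasurable.restrict)
    filter_upwards with x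
    rw [Real.norm_eq_abs, abs_of_nonneg (hgpos x).le]
    have := Real.log_le_sub_one_of_pos (hden x)
    linarith
  have hLHS : Tendsto (fun M : ℝ => ∫ x in (0:ℝ)..M, g x) atTop
      (𝓝 (∫ x in Set.Ioi (0:ℝ), g x)) :=
    intervalIntegral_tendsto_integral_Ioi 0 hgint tendsto_id
  -- RHS limit
  have hgzero : Tendsto g atTop (𝓝 0) := by
    have h1 : Tendsto (fun x : ℝ => Real.exp (-x)) atTop (𝓝 0) :=
      Real.tendsto_exp_neg_atTop_nhds_zero
    have h2 : Tendsto (fun x : ℝ => 1 + c * Real.exp (-x)) atTop (𝓝 1) := by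
      have := (h1.const_mul c).const_add 1
      simpa using this
    have h3 : ContinuousAt Real.log 1 := Real.continuousAt_log one_ne_zero
    have := h3.tendsto.comp h2
    simpa [hgdef, Function.comp_def] using this
  have hprim : Continuous fun u : ℝ => ∫ t in u..(g 0), F t := by
    have hint : ∀ a b : ℝ, IntervalIntegrable F volume a b :=
      fun a b => F_continuous.intervalIntegrable a b
    have h := intervalIntegral.continuous_primitive hint (g 0)
    have : Continuous fun u : ℝ => -∫ t in (g 0)..u, F t := h.neg
    refine this.congr fun u => ?_
    exact (intervalIntegral.integral_symm (g 0) u).symm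
  have hRHS : Tendsto (fun M : ℝ => ∫ t in g M..g 0, F t) atTop
      (𝓝 (∫ t in (0:ℝ)..(g 0), F t)) :=
    (hprim.continuousAt.tendsto).comp hgzero
  have hfinal : (∫ x in Set.Ioi (0:ℝ), g x) = ∫ t in (0:ℝ)..(g 0), F t := by
    apply tendsto_nhds_unique hLHS
    refine hRHS.congr fun M => (hsub M).symm
  have hg0 : g 0 = Real.log (1 + Real.exp (-α)) := by simp [hgdef, hc]
  rw [← hg0]
  exact hfinal
end

section
/- For every real number α > 0, the identity -∫_0^∞ ln(1 - e^{-α} e^{-x}) dx = ∫_0^{-ln(1 - e^{-α})} t/(e^t - 1) dt holds, where the integrand t/(e^t - 1) is extended to take the value 1 at t = 0. -/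
/-- The function `t ↦ t / (e^t - 1)`, extended continuously by the value `1` at `t = 0`. -/
noncomputable def G (t : ℝ) : ℝ := if t = 0 then 1 else t / (Real.exp t - 1)

open Real MeasureTheory Set

theorem stmt_8 (α : ℝ) (hα : 0 < α) :
    -∫ x in Set.Ioi (0 : ℝ), Real.log (1 - Real.exp (-α) * Real.exp (-x)) =
      ∫ t in (0 : ℝ)..(-Real.log (1 - Real.exp (-α))), G t := by
  set t0 : ℝ := -Real.log (1 - Real.exp (-α)) with ht0
  set f : ℝ → ℝ := fun x => -Real.log (1 - Real.exp (-α) * Real.exp (-x)) with hfdef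
  set f' : ℝ → ℝ := fun x =>
    -((Real.exp (-α) * Real.exp (-x)) / (1 - Real.exp (-α) * Real.exp (-x))) with hf'def
  have heα : Real.exp (-α) < 1 := by
    rw [Real.exp_lt_one_iff]; linarith
  have heα0 : 0 < Real.exp (-α) := Real.exp_pos _
  have hu : ∀ x : ℝ, 0 ≤ x → 0 < 1 - Real.exp (-α) * Real.exp (-x) := by
    intro x hx
    have h1 : Real.exp (-x) ≤ 1 := Real.exp_le_one_iff.2 (by linarith)
    nlinarith [Real.exp_pos (-x)]
  have hu1 : ∀ x : ℝ, 1 - Real.exp (-α) * Real.exp (-x) < 1 := by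
    intro x
    nlinarith [Real.exp_pos (-x)]
  have ht0pos : 0 < t0 := by
    rw [ht0, neg_pos]
    exact Real.log_neg (by nlinarith) (by nlinarith)
  -- derivative
  have hderiv : ∀ x ∈ Set.Ioi (0:ℝ), HasDerivWithinAt f (f' x) (Set.Ioi 0) x := by
    intro x hx
    have hx0 : (0:ℝ) ≤ x := le_of_lt hx
    have h1 : HasDerivAt (fun x : ℝ => Real.exp (-x)) (-Real.exp (-x)) x := by
      simpa [Function.comp_def] using (Real.hasDerivAt_exp (-x)).comp x (hasDerivAt_neg x)
    have h2 : HasDerivAt (fun x : ℝ => 1 - Real.exp (-α) * Real.exp (-x))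
        (Real.exp (-α) * Real.exp (-x)) x := by
      have := ((h1.const_mul (Real.exp (-α))).const_sub 1)
      exact this.congr_deriv (by ring)
    have hne : 1 - Real.exp (-α) * Real.exp (-x) ≠ 0 := ne_of_gt (hu x hx0)
    have h3 := (h2.log hne).neg
    exact h3.hasDerivWithinAt
  -- injectivity
  have hinj : Set.InjOn f (Set.Ioi 0) := by
    intro x hx y hy hxy
    have hux := hu x (le_of_lt hx)
    have huy := hu y (le_of_lt hy)
    have : Real.exp (-(f x)) = Real.exp (-(f y)) := by rw [hxy]
    rw [hfdef] at this
    simp only [neg_neg] at this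
    rw [Real.exp_log hux, Real.exp_log huy] at this
    have hex : Real.exp (-x) = Real.exp (-y) :=
      mul_left_cancel₀ (ne_of_gt heα0) (by linarith)
    exact neg_injective (Real.exp_injective hex)
  -- image
  have himg : f '' Set.Ioi 0 = Set.Ioo 0 t0 := by
    ext t
    constructor
    · rintro ⟨x, hx, rfl⟩
      have hxp : (0:ℝ) < x := hx
      have hx0 : (0:ℝ) ≤ x := le_of_lt hxp
      have hux := hu x hx0
      constructor
      · rw [hfdef]
        simp only [neg_pos]
        exact Real.log_neg hux (hu1 x)
      · rw [hfdef, ht0]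
        simp only [neg_lt_neg_iff]
        apply Real.log_lt_log (by nlinarith)
        have : Real.exp (-x) < 1 := Real.exp_lt_one_iff.2 (by linarith [hxp])
        nlinarith
    · rintro ⟨ht1, ht2⟩
      have het : Real.exp (-t) < 1 := Real.exp_lt_one_iff.2 (by linarith)
      have het0 : 0 < Real.exp (-t) := Real.exp_pos _
      have hv : 0 < 1 - Real.exp (-t) := by linarith
      refine ⟨-α - Real.log (1 - Real.exp (-t)), ?_, ?_⟩
      · have : Real.log (1 - Real.exp (-t)) < -α := by
          rw [Real.log_lt_iff_lt_exp hv]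
          -- 1 - exp(-t) < exp(-α)
          have h1 : Real.exp (-t0) < Real.exp (-t) := Real.exp_lt_exp.2 (by linarith)
          have h2 : Real.exp (-t0) = 1 - Real.exp (-α) := by
            rw [ht0, neg_neg, Real.exp_log (by nlinarith)]
          linarith
        simpa using by linarith
      · rw [hfdef]
        have key : Real.exp (-α) * Real.exp (-(-α - Real.log (1 - Real.exp (-t))))
            = 1 - Real.exp (-t) := by
          rw [← Real.exp_add]
          have : -α + -(-α - Real.log (1 - Real.exp (-t))) = Real.log (1 - Real.exp (-t)) := by
            ring
          rw [this, Real.exp_log hv]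
        simp only [key]
        simp [Real.log_exp]
  -- change of variables
  have hcov := MeasureTheory.integral_image_eq_integral_abs_deriv_smul
    measurableSet_Ioi hderiv hinj G
  rw [himg] at hcov
  have hLHS : ∫ t in (0:ℝ)..t0, G t = ∫ t in Set.Ioo (0:ℝ) t0, G t := by
    rw [intervalIntegral.integral_of_le (le_of_lt ht0pos),
      MeasureTheory.integral_Ioc_eq_integral_Ioo]
  rw [hLHS, hcov]
  rw [← MeasureTheory.integral_neg]
  apply MeasureTheory.setIntegral_congr_fun measurableSet_Ioi
  intro x hx
  have hx0 : (0:ℝ) ≤ x := le_of_lt hx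
  have hux := hu x hx0
  have hux1 := hu1 x
  have hfx : 0 < f x := by
    rw [hfdef]; simp only [neg_pos]; exact Real.log_neg hux hux1
  have hexp : Real.exp (f x) = (1 - Real.exp (-α) * Real.exp (-x))⁻¹ := by
    have hfx' : f x = -Real.log (1 - Real.exp (-α) * Real.exp (-x)) := rfl
    rw [hfx', Real.exp_neg, Real.exp_log hux]
  have hw : 0 < Real.exp (-α) * Real.exp (-x) := by positivity
  have habs : |f' x| = (Real.exp (-α) * Real.exp (-x)) / (1 - Real.exp (-α) * Real.exp (-x)) := by
    have : f' x = -(Real.exp (-α) * Real.exp (-x) / (1 - Real.exp (-α) * Real.exp (-x))) := rfl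
    rw [this, abs_neg]
    exact abs_of_pos (div_pos hw hux)
  have hm1 : Real.exp (f x) - 1
      = (Real.exp (-α) * Real.exp (-x)) / (1 - Real.exp (-α) * Real.exp (-x)) := by
    rw [hexp]
    field_simp
    ring
  show -Real.log (1 - Real.exp (-α) * Real.exp (-x)) = |f' x| • G (f x)
  rw [smul_eq_mul, G, if_neg (ne_of_gt hfx), hm1, habs, hfdef]
  have hne : Real.exp (-α) * Real.exp (-x) ≠ 0 := ne_of_gt hw
  have hune : (1 - Real.exp (-α) * Real.exp (-x)) ≠ 0 := ne_of_gt hux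
  field_simp
end

section
/- For every real number u > 0, there exists a unique real number v > 0 satisfying v²/u² = ∫_0^v t/(e^t - 1) dt, where the integrand t/(e^t - 1) is extended to take the value 1 at t = 0. -/
lemma G_zero : G 0 = 1 := by simp [G]

lemma G_cont : Continuous G := by
  rw [continuous_iff_continuousAt]
  intro x
  rcases eq_or_ne x 0 with rfl | hx
  · -- continuity at 0
    have hslope : Filter.Tendsto (fun t : ℝ => t⁻¹ * (Real.exp t - 1)) (nhdsWithin 0 {(0:ℝ)}ᶜ)
        (nhds 1) := by
      have h := (Real.hasDerivAt_exp 0)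
      rw [hasDerivAt_iff_tendsto_slope] at h
      simpa [slope_fun_def, Real.exp_zero] using h
    have hinv : Filter.Tendsto G (nhdsWithin 0 {(0:ℝ)}ᶜ) (nhds 1) := by
      have := hslope.inv₀ one_ne_zero
      rw [inv_one] at this
      refine this.congr' ?_
      filter_upwards [self_mem_nhdsWithin] with t ht
      simp only [Set.mem_compl_iff, Set.mem_singleton_iff] at ht
      simp [G, ht, mul_inv, inv_inv, div_eq_mul_inv, mul_comm]
    have : Filter.Tendsto G (nhds 0) (nhds 1) := by
      rw [← nhdsNE_sup_pure]
      refine Filter.Tendsto.sup hinv ?_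
      simpa [G_zero] using (tendsto_pure_nhds G 0).congr (fun x => rfl) |>.mono_left le_rfl
    simpa [ContinuousAt, G_zero] using this
  · have hne : Real.exp x - 1 ≠ 0 := by
      intro h
      apply hx
      have h2 : Real.exp x = Real.exp 0 := by rw [Real.exp_zero]; linarith
      exact Real.exp_injective h2
    have h1 : ContinuousAt (fun t => t / (Real.exp t - 1)) x :=
      (continuousAt_id).div ((Real.continuous_exp.continuousAt).sub continuousAt_const) hne
    refine h1.congr ?_
    filter_upwards [isOpen_compl_singleton.mem_nhds (by simpa using hx : x ∈ ({(0:ℝ)}ᶜ : Set ℝ))]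
      with t ht
    simp only [Set.mem_compl_iff, Set.mem_singleton_iff] at ht
    simp [G, ht]

lemma G_pos {t : ℝ} (ht : 0 ≤ t) : 0 < G t := by
  rcases eq_or_lt_of_le ht with rfl | ht'
  · simp [G]
  · have h1 : 0 < Real.exp t - 1 := by
      have := Real.add_one_lt_exp (ne_of_gt ht')
      linarith
    simp only [G, if_neg (ne_of_gt ht')]
    positivity

lemma G_le_one {t : ℝ} (ht : 0 ≤ t) : G t ≤ 1 := by
  rcases eq_or_lt_of_le ht with rfl | ht'
  · simp [G]
  · have h1 : 0 < Real.exp t - 1 := by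
      have := Real.add_one_lt_exp (ne_of_gt ht')
      linarith
    rw [G, if_neg (ne_of_gt ht'), div_le_one h1]
    have := Real.add_one_le_exp t
    linarith

lemma G_strictAnti : StrictAntiOn G (Set.Ici (0:ℝ)) := by
  refine strictAntiOn_of_deriv_neg (convex_Ici 0) G_cont.continuousOn ?_
  intro x hx
  rw [interior_Ici] at hx
  have hxpos : (0:ℝ) < x := hx
  have hne : Real.exp x - 1 ≠ 0 := by
    have := Real.add_one_lt_exp (ne_of_gt hxpos); intro h; nlinarith [this]
  have hd : HasDerivAt (fun t => t / (Real.exp t - 1))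
      ((1 * (Real.exp x - 1) - x * Real.exp x) / (Real.exp x - 1) ^ 2) x := by
    exact (hasDerivAt_id x).div ((Real.hasDerivAt_exp x).sub_const 1) hne
  have heq : G =ᶠ[nhds x] fun t => t / (Real.exp t - 1) := by
    filter_upwards [isOpen_compl_singleton.mem_nhds
      (by simpa using ne_of_gt hxpos : x ∈ ({(0:ℝ)}ᶜ : Set ℝ))] with t ht
    simp only [Set.mem_compl_iff, Set.mem_singleton_iff] at ht
    simp [G, ht]
  rw [heq.deriv_eq, hd.deriv]
  have hnum : 1 * (Real.exp x - 1) - x * Real.exp x < 0 := by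
    have := Real.add_one_lt_exp (neg_ne_zero.mpr (ne_of_gt hxpos))
    have hpos := Real.exp_pos x
    have hinv : Real.exp (-x) = (Real.exp x)⁻¹ := Real.exp_neg x
    rw [hinv] at this
    have : (1 - x) * Real.exp x < 1 := by
      have h2 : (1 - x) < (Real.exp x)⁻¹ := by linarith
      calc (1 - x) * Real.exp x < (Real.exp x)⁻¹ * Real.exp x :=
            mul_lt_mul_of_pos_right h2 hpos
        _ = 1 := inv_mul_cancel₀ (ne_of_gt hpos)
    nlinarith
  have hden : 0 < (Real.exp x - 1) ^ 2 := by positivity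
  exact div_neg_of_neg_of_pos hnum hden

lemma integral_ge {a b : ℝ} (ha : 0 ≤ a) (hab : a ≤ b) :
    (b - a) * G b ≤ ∫ t in a..b, G t := by
  have h : ∫ t in a..b, G b ≤ ∫ t in a..b, G t := by
    apply intervalIntegral.integral_mono_on hab
      (intervalIntegrable_const) (G_cont.intervalIntegrable a b)
    intro x hx
    exact (G_strictAnti.antitoneOn (Set.mem_Ici.mpr (le_trans ha hx.1))
      (Set.mem_Ici.mpr (le_trans (le_trans ha hx.1) hx.2)) hx.2)
  simpa [mul_comm] using h

lemma integral_le {a b : ℝ} (ha : 0 ≤ a) (hab : a ≤ b) :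
    (∫ t in a..b, G t) ≤ (b - a) * G a := by
  have h : ∫ t in a..b, G t ≤ ∫ t in a..b, G a := by
    apply intervalIntegral.integral_mono_on hab
      (G_cont.intervalIntegrable a b) intervalIntegrable_const
    intro x hx
    exact G_strictAnti.antitoneOn (Set.mem_Ici.mpr ha)
      (Set.mem_Ici.mpr (le_trans ha hx.1)) hx.1
  simpa [mul_comm] using h

lemma integral_gt {a : ℝ} (ha : 0 < a) : a * G a < ∫ t in (0:ℝ)..a, G t := by
  have hsplit : (∫ t in (0:ℝ)..(a/2), G t) + ∫ t in (a/2)..a, G t = ∫ t in (0:ℝ)..a, G t :=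
    intervalIntegral.integral_add_adjacent_intervals
      (G_cont.intervalIntegrable _ _) (G_cont.intervalIntegrable _ _)
  have h1 : (a/2 - 0) * G (a/2) ≤ ∫ t in (0:ℝ)..(a/2), G t :=
    integral_ge le_rfl (by linarith)
  have h2 : (a - a/2) * G a ≤ ∫ t in (a/2)..a, G t :=
    integral_ge (by linarith) (by linarith)
  have h3 : G a < G (a/2) :=
    G_strictAnti (Set.mem_Ici.mpr (by linarith)) (Set.mem_Ici.mpr ha.le) (by linarith)
  nlinarith

lemma key {a b : ℝ} (ha : 0 < a) (hab : a < b) :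
    a ^ 2 * ∫ t in (0:ℝ)..b, G t < b ^ 2 * ∫ t in (0:ℝ)..a, G t := by
  have hsplit : (∫ t in (0:ℝ)..a, G t) + ∫ t in a..b, G t = ∫ t in (0:ℝ)..b, G t :=
    intervalIntegral.integral_add_adjacent_intervals
      (G_cont.intervalIntegrable _ _) (G_cont.intervalIntegrable _ _)
  have h1 : (∫ t in a..b, G t) ≤ (b - a) * G a := integral_le ha.le hab.le
  have h2 : a * G a < ∫ t in (0:ℝ)..a, G t := integral_gt ha
  have hGa : 0 < G a := G_pos ha.le
  have hIa : 0 < ∫ t in (0:ℝ)..a, G t := lt_trans (by positivity) h2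
  have hpos : 0 < a * (b - a) := by nlinarith
  have e1 : a ^ 2 * (∫ t in a..b, G t) ≤ a ^ 2 * ((b - a) * G a) :=
    mul_le_mul_of_nonneg_left h1 (sq_nonneg a)
  have e2 : a * (b - a) * (a * G a) < a * (b - a) * ∫ t in (0:ℝ)..a, G t :=
    mul_lt_mul_of_pos_left h2 hpos
  have e3 : a * (b - a) * (∫ t in (0:ℝ)..a, G t) ≤ (b - a) * (b + a) * ∫ t in (0:ℝ)..a, G t :=
    mul_le_mul_of_nonneg_right (by nlinarith) hIa.le
  nlinarith [e1, e2, e3]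

theorem stmt_12 (u : ℝ) (hu : 0 < u) :
    ∃! v : ℝ, 0 < v ∧ v ^ 2 / u ^ 2 = ∫ t in (0 : ℝ)..v, G t := by
  have hu2 : (0:ℝ) < u ^ 2 := by positivity
  have hG1 : 0 < G 1 := G_pos zero_le_one
  set c : ℝ := min 1 (u ^ 2 * G 1 / 2) with hc
  have hc0 : 0 < c := lt_min one_pos (by positivity)
  set B : ℝ := max (u ^ 2 + 1) (c + 1) with hB
  have hcB : c < B := lt_of_lt_of_le (by linarith) (le_max_right _ _)
  have hBu : u ^ 2 < B := lt_of_lt_of_le (by linarith) (le_max_left _ _)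
  set F : ℝ → ℝ := fun v => (∫ t in (0:ℝ)..v, G t) - v ^ 2 / u ^ 2 with hF
  have hFc : 0 < F c := by
    have h1 : (c - 0) * G c ≤ ∫ t in (0:ℝ)..c, G t := integral_ge le_rfl hc0.le
    have h2 : G 1 ≤ G c :=
      G_strictAnti.antitoneOn (Set.mem_Ici.mpr hc0.le) (Set.mem_Ici.mpr zero_le_one)
        (min_le_left _ _)
    have h3 : c ≤ u ^ 2 * G 1 / 2 := min_le_right _ _
    have : c ^ 2 / u ^ 2 < c * G 1 := by
      rw [div_lt_iff₀ hu2]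
      nlinarith
    simp only [hF]
    nlinarith
  have hFB : F B < 0 := by
    have h1 : (∫ t in (0:ℝ)..B, G t) ≤ (B - 0) * G 0 := integral_le le_rfl (by linarith)
    rw [G_zero] at h1
    have hB0 : 0 < B := lt_trans hc0 hcB
    have : B < B ^ 2 / u ^ 2 := by
      rw [lt_div_iff₀ hu2]
      nlinarith
    simp only [hF]
    linarith
  have hFcont : Continuous F := by
    apply Continuous.sub
    · exact intervalIntegral.continuous_primitive
        (fun a b => G_cont.intervalIntegrable a b) 0
    · continuity
  have hIVT : (0:ℝ) ∈ F '' Set.Ioo c B := by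
    apply intermediate_value_Ioo' hcB.le hFcont.continuousOn
    exact ⟨hFB, hFc⟩
  obtain ⟨v, hv, hFv⟩ := hIVT
  have hv0 : 0 < v := lt_trans hc0 hv.1
  have hveq : v ^ 2 / u ^ 2 = ∫ t in (0:ℝ)..v, G t := by
    simp only [hF] at hFv; linarith
  refine ⟨v, ⟨hv0, hveq⟩, ?_⟩
  rintro y ⟨hy0, hyeq⟩
  by_contra hne
  have habs : ∀ a b : ℝ, 0 < a → a < b →
      a ^ 2 / u ^ 2 = (∫ t in (0:ℝ)..a, G t) →
      b ^ 2 / u ^ 2 = (∫ t in (0:ℝ)..b, G t) → False := by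
    intro a b ha hab hae hbe
    have := key ha hab
    rw [← hae, ← hbe] at this
    have heq : a ^ 2 * (b ^ 2 / u ^ 2) = b ^ 2 * (a ^ 2 / u ^ 2) := by ring
    rw [heq] at this
    exact lt_irrefl _ this
  rcases lt_or_gt_of_ne hne with h | h
  · exact habs y v hy0 h hyeq hveq
  · exact habs v y hv0 h hveq hyeq
end
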